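/- Let a0, c, mu0, mu1 > 0, b ∈ ℝ, and σ > a0/(2c). Set E = 3·a0²·mu1² − 2·a0·b·mu1 − 4·a0·mu0 − b² + 4·a0, assume E·(a0 − c·σ) > 0, and define B = (a0·mu1 − b)/(2·a0). Assume σ satisfies the compatibility condition (σ + 3·a0·B² + 2·b·B − mu0)/a0 = (σ − 1)/(c·σ). Define ω = −(a0·mu1² − b·mu1 − mu0 + σ)·mu1, λ = √(E/(16·a0·(a0 − c·σ))), and d2 = 3·√(2·c·σ − a0)·E/(8·√a0·(a0 − c·σ)). Then the synchronized pair f(ξ) = d2·sech²(λ·ξ) and g(ξ) = √(a0/(2·c·σ − a0))·f(ξ) satisfies the Schrödinger KdV–BBM associated ODE system with parameters a0, c, mu0, mu1, b, wave speed σ, and phase shifts B, ω. -/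

import Mathlib

/-!
The profile `s = sech² (λ ξ)` satisfies `s' = -2 λ tanh (λ ξ) s` and, since `tanh' = λ s` and
`tanh² + s = 1`, the KdV-type equations `s'' = 4 λ² s - 6 λ² s²` and `s''' = (4 λ² - 12 λ² s) s'`.
With `f = d s` and `g = K f`, each equation of the system becomes a polynomial in `s` and `s'`
whose coefficients vanish because of the relations `K d = 6 a0 λ²`, `(1 + K²) d = 12 c σ K λ²`,
`σ + 3 a0 B² + 2 b B - mu0 = 4 a0 λ²` and `4 c σ λ² = σ - 1`; the last two are where `E` and the
compatibility condition enter.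
-/

open Real

def IsKdVBBMSolution (a0 c mu0 mu1 b σ B ω : ℝ) (f g : ℝ → ℝ) : Prop :=
  ∀ ξ : ℝ,
    (deriv f ξ * g ξ + f ξ * deriv g ξ + a0 * iteratedDeriv 3 f ξ
        + (mu0 - σ - 3*a0*B^2 - 2*b*B) * deriv f ξ = 0) ∧
    ((B + mu1) * f ξ * g ξ + (3*a0*B + b) * iteratedDeriv 2 f ξ
        + (ω + B*mu0 - B*σ - a0*B^3 - b*B^2) * f ξ = 0) ∧
    (f ξ * deriv f ξ + g ξ * deriv g ξ + (c*σ) * iteratedDeriv 3 g ξ + (1 - σ) * deriv g ξ = 0)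

noncomputable def sechSq (lam x : ℝ) : ℝ := (1 / cosh (lam * x)) ^ 2

lemma tanh_sq_add_sechSq (lam x : ℝ) : tanh (lam * x) ^ 2 + sechSq lam x = 1 := by
  have := (cosh_pos (lam * x)).ne'
  rw [sechSq, tanh_eq_sinh_div_cosh]
  field_simp
  linarith [cosh_sq (lam * x)]

section SechSq

variable (lam : ℝ)

lemma hasDerivAt_tanh_mul (x : ℝ) :
    HasDerivAt (fun x => tanh (lam * x)) (lam * sechSq lam x) x := by
  have hlin := (hasDerivAt_id x).const_mul lam
  have hcosh := (cosh_pos (lam * x)).ne'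
  simp only [tanh_eq_sinh_div_cosh]
  refine (hlin.sinh.div hlin.cosh hcosh).congr_deriv ?_
  simp only [sechSq, id, mul_one]
  field_simp
  linear_combination lam * cosh_sq (lam * x)

lemma hasDerivAt_sechSq (x : ℝ) :
    HasDerivAt (sechSq lam) (-2 * lam * tanh (lam * x) * sechSq lam x) x := by
  have hlin := (hasDerivAt_id x).const_mul lam
  have hcosh := (cosh_pos (lam * x)).ne'
  refine (((hasDerivAt_const x (1 : ℝ)).fun_div hlin.cosh hcosh).fun_pow 2).congr_deriv ?_
  simp only [sechSq, tanh_eq_sinh_div_cosh, id, mul_one]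
  norm_num
  field_simp

lemma deriv_sechSq :
    deriv (sechSq lam) = fun x => -2 * lam * tanh (lam * x) * sechSq lam x :=
  funext fun x => (hasDerivAt_sechSq lam x).deriv

lemma iteratedDeriv_two_sechSq :
    iteratedDeriv 2 (sechSq lam) =
      fun x => 4 * lam ^ 2 * sechSq lam x - 6 * lam ^ 2 * sechSq lam x ^ 2 := by
  rw [iteratedDeriv_succ, iteratedDeriv_one, deriv_sechSq]
  funext x
  rw [(((hasDerivAt_tanh_mul lam x).const_mul (-2 * lam)).fun_mul (hasDerivAt_sechSq lam x)).deriv]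
  linear_combination 4 * lam ^ 2 * sechSq lam x * tanh_sq_add_sechSq lam x

lemma iteratedDeriv_three_sechSq :
    iteratedDeriv 3 (sechSq lam) =
      fun x => (4 * lam ^ 2 - 12 * lam ^ 2 * sechSq lam x) * deriv (sechSq lam) x := by
  rw [iteratedDeriv_succ, iteratedDeriv_two_sechSq]
  funext x
  have hs := hasDerivAt_sechSq lam x
  rw [((hs.const_mul _).fun_sub ((hs.fun_pow 2).const_mul _)).deriv, hs.deriv]
  ring

end SechSq

theorem isKdVBBMSolution_sechSq {a0 c mu0 mu1 b σ B ω lam d K : ℝ}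
    (hkdv : σ + 3*a0*B^2 + 2*b*B - mu0 = 4*a0*lam^2) (hbbm : 4*(c*σ)*lam^2 = σ - 1)
    (hKd : K*d = 6*a0*lam^2) (hKd' : (1 + K^2)*d = 12*(c*σ)*K*lam^2)
    (hB : 3*a0*B + b = a0*(B + mu1))
    (hω : ω + B*mu0 - B*σ - a0*B^3 - b*B^2 = -(σ + 3*a0*B^2 + 2*b*B - mu0)*(B + mu1)) :
    IsKdVBBMSolution a0 c mu0 mu1 b σ B ω
      (fun ξ => d * sechSq lam ξ) (fun ξ => K * (d * sechSq lam ξ)) := by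
  intro ξ
  simp only [deriv_const_mul_field', iteratedDeriv_const_mul_field, iteratedDeriv_two_sechSq,
    iteratedDeriv_three_sechSq]
  set s := sechSq lam ξ
  set s' := deriv (sechSq lam) ξ
  refine ⟨?_, ?_, ?_⟩
  · linear_combination d * s' * (2 * s * hKd - hkdv)
  · linear_combination (B + mu1) * d * s * (s * hKd - hkdv) + s * d * hω
      + d * (4*lam^2*s - 6*lam^2*s^2) * hB
  · linear_combination d * s' * (s * hKd' + K * hbbm)

section Parameters

variable {a0 c mu0 mu1 b σ E B ω lam d2 : ℝ}

lemma kdv_bbm_speed_relations (ha0 : a0 ≠ 0) (hcσ : c*σ ≠ 0) (hX : a0 - c*σ ≠ 0)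
    (hE : E = 3*a0^2*mu1^2 - 2*a0*b*mu1 - 4*a0*mu0 - b^2 + 4*a0)
    (h_B : B = (a0*mu1 - b)/(2*a0))
    (hcompat : (σ + 3*a0*B^2 + 2*b*B - mu0)/a0 = (σ - 1)/(c*σ))
    (hlam : lam^2 * (16*a0*(a0 - c*σ)) = E) :
    σ + 3*a0*B^2 + 2*b*B - mu0 = 4*a0*lam^2 ∧ 4*(c*σ)*lam^2 = σ - 1 := by
  rw [div_eq_div_iff ha0 hcσ] at hcompat
  have hQ : (σ + 3*a0*B^2 + 2*b*B - mu0)*(4*a0) = (σ - 1)*(4*a0) + E := by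
    rw [h_B, hE]; field_simp; ring
  -- `hQ - 4 * hcompat` reads `4 (a0 - c σ) Q = E`, with `Q` the left-hand side below
  have hkdv : σ + 3*a0*B^2 + 2*b*B - mu0 = 4*a0*lam^2 :=
    mul_left_cancel₀ (mul_ne_zero four_ne_zero hX) (by linear_combination hQ - 4*hcompat - hlam)
  exact ⟨hkdv, mul_left_cancel₀ ha0 (by linear_combination hcompat - (c*σ)*hkdv)⟩

lemma kdv_bbm_amplitude_relations (ha0 : 0 < a0) (hD : 0 < 2*c*σ - a0) (hX : a0 - c*σ ≠ 0)
    (hlam : lam^2 * (16*a0*(a0 - c*σ)) = E)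
    (h_d2 : d2 = 3*Real.sqrt (2*c*σ - a0)*E/(8*Real.sqrt a0*(a0 - c*σ))) :
    Real.sqrt (a0/(2*c*σ - a0)) * d2 = 6*a0*lam^2 ∧
      (1 + Real.sqrt (a0/(2*c*σ - a0))^2)*d2
        = 12*(c*σ)*Real.sqrt (a0/(2*c*σ - a0))*lam^2 := by
  have hKd : Real.sqrt (a0/(2*c*σ - a0)) * d2 = 6*a0*lam^2 := by
    have hsa0 : Real.sqrt a0 ≠ 0 := by positivity
    have hsD : Real.sqrt (2*c*σ - a0) ≠ 0 := by positivity
    rw [Real.sqrt_div ha0.le, h_d2, ← hlam]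
    field_simp
    ring
  set K := Real.sqrt (a0/(2*c*σ - a0))
  have hK : K ≠ 0 := by positivity
  have hK2 : K^2 * (2*c*σ - a0) = a0 := by
    rw [Real.sq_sqrt (by positivity)]
    field_simp
  exact ⟨hKd, mul_left_cancel₀ hK (by linear_combination (1 + K^2)*hKd - 6*lam^2*hK2)⟩

lemma kdv_bbm_shift_relations (ha0 : a0 ≠ 0) (h_B : B = (a0*mu1 - b)/(2*a0))
    (h_ω : ω = -(a0*mu1^2 - b*mu1 - mu0 + σ)*mu1) :
    3*a0*B + b = a0*(B + mu1) ∧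
      ω + B*mu0 - B*σ - a0*B^3 - b*B^2 = -(σ + 3*a0*B^2 + 2*b*B - mu0)*(B + mu1) := by
  subst h_B h_ω
  constructor <;> field_simp <;> ring

end Parameters

theorem stmt_13_general
    (a0 c mu0 mu1 b : ℝ)
    (ha0 : 0 < a0) (hc : 0 < c)
    (σ : ℝ) (hσ : σ > a0/(2*c))
    (E : ℝ) (hE : E = 3*a0^2*mu1^2 - 2*a0*b*mu1 - 4*a0*mu0 - b^2 + 4*a0) (hEsgn : E * (a0 - c*σ) > 0)
    (B ω lam d2 : ℝ)
    (h_B : B = (a0*mu1 - b)/(2*a0))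
    (h_ω : ω = -(a0*mu1^2 - b*mu1 - mu0 + σ)*mu1)
    (h_lam : lam = Real.sqrt (E/(16*a0*(a0 - c*σ))))
    (h_d2 : d2 = 3*Real.sqrt (2*c*σ - a0)*E/(8*Real.sqrt a0*(a0 - c*σ)))
    (hcompat : (σ + 3*a0*B^2 + 2*b*B - mu0)/a0 = (σ - 1)/(c*σ))
    (f g : ℝ → ℝ)
    (hfdef : ∀ ξ : ℝ, f ξ = d2 * (1/Real.cosh (lam*ξ))^2)
    (hgdef : ∀ ξ : ℝ, g ξ = Real.sqrt (a0/(2*c*σ - a0)) * f ξ) :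
    ∀ ξ : ℝ,
      (deriv f ξ * g ξ + f ξ * deriv g ξ + a0 * iteratedDeriv 3 f ξ + (mu0 - σ - 3*a0*B^2 - 2*b*B) * deriv f ξ = 0) ∧
      ((B + mu1) * f ξ * g ξ + (3*a0*B + b) * iteratedDeriv 2 f ξ + (ω + B*mu0 - B*σ - a0*B^3 - b*B^2) * f ξ = 0) ∧
      (f ξ * deriv f ξ + g ξ * deriv g ξ + (c*σ) * iteratedDeriv 3 g ξ + (1 - σ) * deriv g ξ = 0) := by
  have hD : 0 < 2*c*σ - a0 := by
    rw [gt_iff_lt, div_lt_iff₀ (by positivity)] at hσ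
    linarith
  have hX : a0 - c*σ ≠ 0 := right_ne_zero_of_mul hEsgn.ne'
  have hlam : lam^2 * (16*a0*(a0 - c*σ)) = E := by
    have hnonneg : 0 ≤ E/(16*a0*(a0 - c*σ)) := by
      rw [show E/(16*a0*(a0 - c*σ)) = E*(a0 - c*σ)/(16*a0*(a0 - c*σ)^2) by field_simp]
      positivity
    rw [h_lam, Real.sq_sqrt hnonneg]
    field_simp
  obtain ⟨hkdv, hbbm⟩ :=
    kdv_bbm_speed_relations ha0.ne' (by linarith : 0 < c*σ).ne' hX hE h_B hcompat hlam
  obtain ⟨hKd, hKd'⟩ := kdv_bbm_amplitude_relations ha0 hD hX hlam h_d2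
  obtain ⟨hB, hω⟩ := kdv_bbm_shift_relations ha0.ne' h_B h_ω
  have hf : f = fun ξ => d2 * sechSq lam ξ := funext hfdef
  have hg : g = fun ξ => Real.sqrt (a0/(2*c*σ - a0)) * (d2 * sechSq lam ξ) := by
    funext ξ; rw [hgdef, hf]
  rw [hf, hg]
  exact isKdVBBMSolution_sechSq hkdv hbbm hKd hKd' hB hω

theorem stmt_13
    (a0 c mu0 mu1 b : ℝ)
    (ha0 : 0 < a0) (hc : 0 < c) (hmu0 : 0 < mu0) (hmu1 : 0 < mu1)
    (σ : ℝ) (hσ : σ > a0/(2*c))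
    (E : ℝ) (hE : E = 3*a0^2*mu1^2 - 2*a0*b*mu1 - 4*a0*mu0 - b^2 + 4*a0) (hEsgn : E * (a0 - c*σ) > 0)
    (B ω lam d2 : ℝ)
    (h_B : B = (a0*mu1 - b)/(2*a0))
    (h_ω : ω = -(a0*mu1^2 - b*mu1 - mu0 + σ)*mu1)
    (h_lam : lam = Real.sqrt (E/(16*a0*(a0 - c*σ))))
    (h_d2 : d2 = 3*Real.sqrt (2*c*σ - a0)*E/(8*Real.sqrt a0*(a0 - c*σ)))
    (hcompat : (σ + 3*a0*B^2 + 2*b*B - mu0)/a0 = (σ - 1)/(c*σ))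
    (f g : ℝ → ℝ)
    (hfdef : ∀ ξ : ℝ, f ξ = d2 * (1/Real.cosh (lam*ξ))^2)
    (hgdef : ∀ ξ : ℝ, g ξ = Real.sqrt (a0/(2*c*σ - a0)) * f ξ) :
    ∀ ξ : ℝ,
      (deriv f ξ * g ξ + f ξ * deriv g ξ + a0 * iteratedDeriv 3 f ξ + (mu0 - σ - 3*a0*B^2 - 2*b*B) * deriv f ξ = 0) ∧
      ((B + mu1) * f ξ * g ξ + (3*a0*B + b) * iteratedDeriv 2 f ξ + (ω + B*mu0 - B*σ - a0*B^3 - b*B^2) * f ξ = 0) ∧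
      (f ξ * deriv f ξ + g ξ * deriv g ξ + (c*σ) * iteratedDeriv 3 g ξ + (1 - σ) * deriv g ξ = 0) :=
  stmt_13_general a0 c mu0 mu1 b ha0 hc σ hσ E hE hEsgn B ω lam d2 h_B h_ω h_lam h_d2 hcompat f g
    hfdef hgdef
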